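/- arXiv:1108.1854 — 2 statements merged into one kernel-verified Lean document; each statement's English description precedes it below -/
import Mathlib

section
/- Let A ∈ ℝ^{n₁×n₁}, B ∈ ℝ^{n₁×n₂}, C ∈ ℝ^{N×n₁}, Γ ∈ ℝ^{m×m}, D ∈ ℝ^{n₂×m}. Suppose (A, C) is observable, (Γ, D) is observable, and no eigenvalue of Γ is a transmission zero of the system (A, B, C) (i.e., for every eigenvalue λ of Γ, the matrix [[A − λI, B], [C, 0]] has full column rank n₁ + n₂). Then the pair (Ā, C̄) is observable, where Ā = [[A, BD], [0, Γ]] ∈ ℝ^{(n₁+m)×(n₁+m)} and C̄ = [C, 0] ∈ ℝ^{N×(n₁+m)}. -/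
/-!
Let `(x, z)` be an eigenvector of `Ā` for `μ` with `C̄ (x, z) = C x = 0`, so that
`A x + B D z = μ x` and `Γ z = μ z`. If `z ≠ 0`, then `μ` is an eigenvalue of `Γ`, and
`(x, D z)` lies in the kernel of the Rosenbrock matrix `[[A - μ I, B], [C, 0]]`, which has full
column rank because `μ` is not a transmission zero; hence `D z = 0`, and observability of
`(Γ, D)` forces `z = 0` after all. With `z = 0` we get `A x = μ x` and `C x = 0`, so `x = 0` by
observability of `(A, C)`.
-/

open Matrix

/-- Hautus-type observability of a pair `(M, L)` with state index type `d`. -/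
def Observable {d N : Type*} [Fintype d] [Fintype N]
    (M : Matrix d d ℝ) (L : Matrix N d ℝ) : Prop :=
  ∀ (μ : ℂ) (v : d → ℂ),
    (M.map (Complex.ofReal)) *ᵥ v = μ • v → (L.map (Complex.ofReal)) *ᵥ v = 0 → v = 0

namespace Matrix

variable {K : Type*} [Field K] {l n₁ n₂ m : Type*} [Fintype n₁] [Fintype n₂] [Fintype m]

theorem mulVec_injective_of_rank_eq_card {p : Type*} (R : Matrix l p K) [Fintype p]
    (h : R.rank = Fintype.card p) : Function.Injective R.mulVec := by
  have hker : Module.finrank K (LinearMap.ker R.mulVecLin) = 0 := by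
    have := LinearMap.finrank_range_add_finrank_ker R.mulVecLin
    rw [Module.finrank_fintype_fun_eq_card] at this
    change R.rank + _ = _ at this
    omega
  exact LinearMap.ker_eq_bot.mp (Submodule.finrank_eq_zero.mp hker)

theorem fromBlocks_sub_smul_one_mulVec_sumElim [DecidableEq n₁]
    (A : Matrix n₁ n₁ K) (B : Matrix n₁ n₂ K) (C : Matrix l n₁ K) (μ : K)
    {x : n₁ → K} {y : n₂ → K} (hxy : A *ᵥ x + B *ᵥ y = μ • x) (hCx : C *ᵥ x = 0) :
    fromBlocks (A - μ • 1) B C 0 *ᵥ Sum.elim x y = 0 := by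
  rw [fromBlocks_mulVec, Sum.elim_comp_inl, Sum.elim_comp_inr, sub_mulVec, smul_mulVec,
    one_mulVec, sub_add_eq_add_sub, hxy, hCx, sub_self, zero_mulVec, add_zero, Sum.elim_zero_zero]

theorem eq_zero_of_cascade_eigenvector [DecidableEq n₁]
    {A : Matrix n₁ n₁ K} {B : Matrix n₁ n₂ K} {C : Matrix l n₁ K} {Γ : Matrix m m K}
    {D : Matrix n₂ m K} {μ : K}
    (hAC : ∀ x, A *ᵥ x = μ • x → C *ᵥ x = 0 → x = 0)
    (hΓD : ∀ z, Γ *ᵥ z = μ • z → D *ᵥ z = 0 → z = 0)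
    (htz : (∃ z, z ≠ 0 ∧ Γ *ᵥ z = μ • z) →
      (fromBlocks (A - μ • 1) B C 0).rank = Fintype.card (n₁ ⊕ n₂))
    {v : n₁ ⊕ m → K} (hv : fromBlocks A (B * D) 0 Γ *ᵥ v = μ • v) (hCv : fromCols C 0 *ᵥ v = 0) :
    v = 0 := by
  obtain ⟨x, z, rfl⟩ : ∃ x z, v = Sum.elim x z := ⟨_, _, (Sum.elim_comp_inl_inr v).symm⟩
  rw [fromBlocks_mulVec] at hv
  have hx : A *ᵥ x + B *ᵥ D *ᵥ z = μ • x := by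
    ext i
    simpa [mulVec_mulVec] using congrFun hv (Sum.inl i)
  have hz : Γ *ᵥ z = μ • z := by
    ext i
    simpa using congrFun hv (Sum.inr i)
  have hCx : C *ᵥ x = 0 := by
    simpa only [fromCols_mulVec_sumElim, zero_mulVec, add_zero] using hCv
  have hz0 : z = 0 := by
    by_contra hz0
    have hker := fromBlocks_sub_smul_one_mulVec_sumElim A B C μ hx hCx
    have hDz : D *ᵥ z = 0 := by
      have hxDz := mulVec_injective_of_rank_eq_card _ (htz ⟨z, hz0, hz⟩)
        (hker.trans (mulVec_zero _).symm)
      exact congrArg (· ∘ Sum.inr) hxDz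
    exact hz0 (hΓD z hz hDz)
  have hx0 : x = 0 := hAC x (by simpa [hz0] using hx) hCx
  rw [hx0, hz0, Sum.elim_zero_zero]

end Matrix

theorem stmt0 {n₁ n₂ m N : ℕ}
    (A : Matrix (Fin n₁) (Fin n₁) ℝ) (B : Matrix (Fin n₁) (Fin n₂) ℝ)
    (C : Matrix (Fin N) (Fin n₁) ℝ)
    (Γ : Matrix (Fin m) (Fin m) ℝ) (D : Matrix (Fin n₂) (Fin m) ℝ)
    (hAC : Observable A C) (hΓD : Observable Γ D)
    (htz : ∀ μ : ℂ, (∃ v : Fin m → ℂ, v ≠ 0 ∧ (Γ.map Complex.ofReal) *ᵥ v = μ • v) →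
      (Matrix.fromBlocks (A.map Complex.ofReal - μ • 1) (B.map Complex.ofReal)
        (C.map Complex.ofReal) 0).rank = n₁ + n₂) :
    Observable (Matrix.fromBlocks A (B * D) 0 Γ)
      (Matrix.of fun (i : Fin N) (j : Fin n₁ ⊕ Fin m) => Sum.elim (C i) (fun _ => (0 : ℝ)) j) := by
  intro μ v hv hCv
  have hBD : (B * D).map Complex.ofReal = B.map Complex.ofReal * D.map Complex.ofReal :=
    Matrix.map_mul (f := Complex.ofRealHom)
  rw [fromBlocks_map, hBD, Matrix.map_zero _ Complex.ofReal_zero] at hv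
  have hC : fromCols (C.map Complex.ofReal) 0 *ᵥ v = 0 := by
    rwa [← Matrix.map_zero _ Complex.ofReal_zero, ← fromCols_map]
  refine eq_zero_of_cascade_eigenvector (hAC μ) (hΓD μ) (fun h => ?_) hv hC
  rw [htz μ h, Fintype.card_sum, Fintype.card_fin, Fintype.card_fin]
end

section
/- Let x, s₁, s₂, s₃ ∈ ℝ² with x ≠ sᵢ for each i, and suppose the points s₁, s₂, s₃ form an equilateral triangle containing x strictly in its interior. Define the unit vectors uᵢ = (x − sᵢ)/‖x − sᵢ‖ and J = Σᵢ uᵢuᵢᵀ ∈ ℝ^{2×2}. Then J is positive definite. -/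
open Matrix

/-!
`J = Cᵀ C` for the matrix `C` with rows `uᵢ`, so `J` is positive definite as soon as `C v = 0`
forces `v = 0`. If `v` is orthogonal to every `uᵢ`, it is orthogonal to every `x - sᵢ`, hence to
every `sᵢ - sⱼ`. But the `sᵢ` affinely span the whole space, because their convex hull has
nonempty interior, so `v = 0`.
-/
theorem eq_zero_of_forall_inner_sub_eq_zero_of_mem_interior_convexHull
    {E ι : Type*} [NormedAddCommGroup E] [InnerProductSpace ℝ E] {s : ι → E} {x v : E}
    (hx : x ∈ interior (convexHull ℝ (Set.range s))) (hv : ∀ i, inner ℝ (x - s i) v = 0) :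
    v = 0 := by
  have hspan : vectorSpan ℝ (Set.range s) = ⊤ := by
    rw [← direction_affineSpan, affineSpan_eq_top_of_nonempty_interior ⟨x, hx⟩,
      AffineSubspace.direction_top]
  have horth : vectorSpan ℝ (Set.range s) ≤ (ℝ ∙ v)ᗮ := by
    rw [vectorSpan_def, Submodule.span_le]
    rintro _ ⟨_, ⟨i, rfl⟩, _, ⟨j, rfl⟩, rfl⟩
    rw [SetLike.mem_coe, Submodule.mem_orthogonal_singleton_iff_inner_left]
    dsimp only
    rw [vsub_eq_sub, show s i - s j = (x - s j) - (x - s i) by abel, inner_sub_left, hv, hv,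
      sub_self]
  rw [hspan, top_le_iff, Submodule.orthogonal_eq_top_iff, Submodule.span_singleton_eq_bot] at horth
  exact horth

theorem inner_eq_zero_of_inner_inv_norm_smul_eq_zero {E : Type*} [NormedAddCommGroup E]
    [InnerProductSpace ℝ E] {w v : E} (h : inner ℝ (‖w‖⁻¹ • w) v = 0) : inner ℝ w v = 0 := by
  rw [real_inner_smul_left, mul_eq_zero, inv_eq_zero, norm_eq_zero] at h
  rcases h with rfl | h
  · exact inner_zero_left v
  · exact h

theorem stmt6_general (x : EuclideanSpace ℝ (Fin 2)) (s : Fin 3 → EuclideanSpace ℝ (Fin 2))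
    (hint : x ∈ interior (convexHull ℝ (Set.range s)))
    (u : Fin 3 → EuclideanSpace ℝ (Fin 2))
    (hu : ∀ i, u i = ‖x - s i‖⁻¹ • (x - s i))
    (J : Matrix (Fin 2) (Fin 2) ℝ)
    (hJ : J = ∑ i : Fin 3, Matrix.of fun a b => u i a * u i b) :
    J.PosDef := by
  set C : Matrix (Fin 3) (Fin 2) ℝ := of fun i => (u i).ofLp
  have hJC : J = Cᴴ * C := by
    ext a b
    simp [hJ, C, mul_apply, Matrix.sum_apply]
  have hker : ∀ v, C *ᵥ v = 0 → v = 0 := by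
    intro v hv
    suffices WithLp.toLp 2 v = 0 by simpa using this
    refine eq_zero_of_forall_inner_sub_eq_zero_of_mem_interior_convexHull hint fun i => ?_
    refine inner_eq_zero_of_inner_inv_norm_smul_eq_zero ?_
    rw [← hu, EuclideanSpace.inner_eq_star_dotProduct, dotProduct_comm]
    exact congrFun hv i
  rw [hJC]
  refine PosDef.conjTranspose_mul_self C fun v w hvw => sub_eq_zero.mp (hker _ ?_)
  rw [mulVec_sub, hvw, sub_self]

theorem stmt6 (x : EuclideanSpace ℝ (Fin 2)) (s : Fin 3 → EuclideanSpace ℝ (Fin 2))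
    (hx : ∀ i, x ≠ s i)
    (hequi : ‖s 0 - s 1‖ = ‖s 1 - s 2‖ ∧ ‖s 1 - s 2‖ = ‖s 2 - s 0‖ ∧ 0 < ‖s 0 - s 1‖)
    (hint : x ∈ interior (convexHull ℝ (Set.range s)))
    (u : Fin 3 → EuclideanSpace ℝ (Fin 2))
    (hu : ∀ i, u i = ‖x - s i‖⁻¹ • (x - s i))
    (J : Matrix (Fin 2) (Fin 2) ℝ)
    (hJ : J = ∑ i : Fin 3, Matrix.of fun a b => u i a * u i b) :
    J.PosDef :=
  stmt6_general x s hint u hu J hJ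
end
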